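/- arXiv:1907.10930 — 2 statements merged into one kernel-verified Lean document; each statement's English description precedes it below -/
import Mathlib

section
/- Let x : Fin n × Fin k → ℤ satisfy ∀ i, ∑_s x (i,s) = 0. Then there exist M ∈ ℕ and a list of triples (i_t, s_t, t_t), t = 1,…,M, with s_t ≠ t_t, such that x = ∑_{t=1}^M (e_{(i_t,s_t)} − e_{(i_t,t_t)}) and for every coordinate m, ∑_{t=1}^M |(e_{(i_t,s_t)} − e_{(i_t,t_t)}) m| = |x m| (no cancellation). -/
/-- The standard unit vector on `Fin n × Fin k`, with `1` in coordinate `p` and `0` elsewhere. -/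
def e {n k : ℕ} (p : Fin n × Fin k) : Fin n × Fin k → ℤ := fun q => if q = p then 1 else 0

lemma graver_key {n k : ℕ} : ∀ (N : ℕ) (x : Fin n × Fin k → ℤ),
    (∑ m, |x m|) = N → (∀ i : Fin n, ∑ s : Fin k, x (i, s) = 0) →
    ∃ L : List (Fin n × Fin k × Fin k),
      (∀ p ∈ L, p.2.1 ≠ p.2.2) ∧
      x = (L.map (fun p => e (p.1, p.2.1) - e (p.1, p.2.2))).sum ∧
      (∀ m, (L.map (fun p => |(e (p.1, p.2.1) - e (p.1, p.2.2)) m|)).sum = |x m|) := by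
  intro N
  induction N using Nat.strong_induction_on with
  | _ N ih =>
    intro x hN hx
    by_cases hx0 : ∀ m, x m = 0
    · exact ⟨[], by simp, by funext m; simp [hx0 m], by intro m; simp [hx0 m]⟩
    · push_neg at hx0
      obtain ⟨m0, hm0⟩ := hx0
      set i := m0.1 with hi
      have hm0' : x (i, m0.2) ≠ 0 := by rwa [hi, Prod.mk.eta]
      have hrow : ∑ s : Fin k, x (i, s) = 0 := hx i
      have hpos : ∃ s, 0 < x (i, s) := by
        by_contra h
        push_neg at h
        have := (Finset.sum_eq_zero_iff_of_nonpos (fun s _ => h s)).1 hrow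
        exact hm0' (this m0.2 (Finset.mem_univ _))
      have hneg : ∃ t, x (i, t) < 0 := by
        by_contra h
        push_neg at h
        have := (Finset.sum_eq_zero_iff_of_nonneg (fun s _ => h s)).1 hrow
        exact hm0' (this m0.2 (Finset.mem_univ _))
      obtain ⟨s, hs⟩ := hpos
      obtain ⟨t, ht⟩ := hneg
      have hst : s ≠ t := by rintro rfl; omega
      set x' : Fin n × Fin k → ℤ := fun m => x m - (e (i, s) m - e (i, t) m) with hx'
      have hnepq : ((i, s) : Fin n × Fin k) ≠ (i, t) := by
        simp [Prod.ext_iff, hst]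
      have habs : ∀ m, |x' m| = |x m| -
          ((if m = (i, s) then 1 else 0) + (if m = (i, t) then 1 else 0)) := by
        intro m
        by_cases h1 : m = (i, s)
        · subst h1
          simp only [hx', e, if_pos rfl, if_neg hnepq]
          rw [abs_of_nonneg (by omega), abs_of_pos hs]
          ring
        · by_cases h2 : m = (i, t)
          · subst h2
            simp only [hx', e, if_pos rfl, if_neg h1]
            rw [abs_of_nonpos (by omega), abs_of_neg ht]
            ring
          · simp only [hx', e, if_neg h1, if_neg h2]
            simp
      have hsum' : (∑ m, |x' m|) = (N : ℤ) - 2 := by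
        rw [Finset.sum_congr rfl (fun m _ => habs m)]
        rw [Finset.sum_sub_distrib, hN, Finset.sum_add_distrib]
        simp
      have hN2 : 2 ≤ N := by
        have h0 : (0 : ℤ) ≤ ∑ m, |x' m| := Finset.sum_nonneg (fun m _ => abs_nonneg _)
        omega
      have hrow' : ∀ i' : Fin n, ∑ u : Fin k, x' (i', u) = 0 := by
        intro i'
        simp only [hx', e]
        rw [Finset.sum_sub_distrib, hx i', Finset.sum_sub_distrib]
        by_cases h : i' = i
        · subst h
          simp [Prod.ext_iff]
        · simp [Prod.ext_iff, h]
      have hxN' : (∑ m, |x' m|) = ((N - 2 : ℕ) : ℤ) := by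
        rw [hsum']; omega
      obtain ⟨L', hL1, hL2, hL3⟩ := ih (N - 2) (by omega) x' hxN' hrow'
      refine ⟨(i, s, t) :: L', ?_, ?_, ?_⟩
      · rintro p hp
        rcases List.mem_cons.1 hp with rfl | hp
        · exact hst
        · exact hL1 p hp
      · funext m
        have := congrFun hL2 m
        simp only [List.map_cons, List.sum_cons, Pi.add_apply]
        simp only [hx'] at this
        rw [Pi.sub_apply]
        omega
      · intro m
        simp only [List.map_cons, List.sum_cons, hL3 m, habs m]
        have hgabs : |(e (i, s) - e (i, t)) m| =
            (if m = (i, s) then 1 else 0) + (if m = (i, t) then 1 else 0) := by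
          by_cases h1 : m = (i, s)
          · subst h1; simp [e, hnepq, hst]
          · by_cases h2 : m = (i, t)
            · subst h2; simp [e, h1]
            · simp [e, h1, h2]
        rw [hgabs]
        have : (if m = (i, s) then (1:ℤ) else 0) + (if m = (i, t) then 1 else 0) ≤ |x m| := by
          by_cases h1 : m = (i, s)
          · subst h1; rw [if_neg hnepq, abs_of_pos hs]; omega
          · by_cases h2 : m = (i, t)
            · subst h2; rw [if_neg h1, abs_of_neg ht]; omega
            · simp [h1, h2, abs_nonneg]
        omega

/-- Every integer vector on `Fin n × Fin k` all of whose brick sums vanish is a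
cancellation-free sum of Graver basis elements `e (i,s) − e (i,t)` of `Iₙ ⊗ 1ₖᵀ`. -/
theorem graver_decomposition_QSAP1 (n k : ℕ) (x : Fin n × Fin k → ℤ)
    (hx : ∀ i : Fin n, ∑ s : Fin k, x (i, s) = 0) :
    ∃ (M : ℕ) (L : List (Fin n × Fin k × Fin k)),
      L.length = M ∧
      (∀ p ∈ L, p.2.1 ≠ p.2.2) ∧
      x = (L.map (fun p => e (p.1, p.2.1) - e (p.1, p.2.2))).sum ∧
      (∀ m : Fin n × Fin k,
        (L.map (fun p => |(e (p.1, p.2.1) - e (p.1, p.2.2)) m|)).sum = |x m|) := by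
  have h0 : (0 : ℤ) ≤ ∑ m, |x m| := Finset.sum_nonneg (fun m _ => abs_nonneg _)
  obtain ⟨L, h1, h2, h3⟩ := graver_key (∑ m, |x m|).toNat x (by omega) hx
  exact ⟨L.length, L, rfl, h1, h2, h3⟩
end

section
/- Let c : Fin n × Fin k → ℝ and let X, Y : Fin n × Fin k → ℤ have all coordinates in {0,1} and equal brick sums: ∀ i, ∑_s X (i,s) = ∑_s Y (i,s). If ∑_{(i,s)} c (i,s) * Y (i,s) < ∑_{(i,s)} c (i,s) * X (i,s), then there exist an index i and s, t with X (i,s) = 1, X (i,t) = 0, and c (i,t) < c (i,s); consequently X − e_{(i,s)} + e_{(i,t)} is binary, satisfies the same brick-sum constraints, and has strictly smaller cost. -/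
/-- Augmentation optimality for a linear objective under the QSAP1 brick-sum constraints
`(Iₙ ⊗ 1ₖᵀ) X = b`: if a binary `X` is beaten by another binary `Y` with the same brick sums,
then some within-brick Graver move `X − e (i,s) + e (i,t)` (with `X (i,s) = 1`, `X (i,t) = 0`,
`c (i,t) < c (i,s)`) is again binary, has the same brick sums, and strictly smaller cost. -/
theorem graver_augmentation_linear_QSAP1 (n k : ℕ) (c : Fin n × Fin k → ℝ)
    (X Y : Fin n × Fin k → ℤ)
    (hX01 : ∀ m, X m = 0 ∨ X m = 1) (hY01 : ∀ m, Y m = 0 ∨ Y m = 1)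
    (hsum : ∀ i : Fin n, ∑ s : Fin k, X (i, s) = ∑ s : Fin k, Y (i, s))
    (hlt : ∑ m, c m * (Y m : ℝ) < ∑ m, c m * (X m : ℝ)) :
    ∃ (i : Fin n) (s t : Fin k), X (i, s) = 1 ∧ X (i, t) = 0 ∧ c (i, t) < c (i, s) ∧
      (∀ m, (X - e (i, s) + e (i, t)) m = 0 ∨ (X - e (i, s) + e (i, t)) m = 1) ∧
      (∀ i' : Fin n, ∑ s' : Fin k, (X - e (i, s) + e (i, t)) (i', s') =
        ∑ s' : Fin k, X (i', s')) ∧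
      ∑ m, c m * ((X - e (i, s) + e (i, t)) m : ℝ) < ∑ m, c m * (X m : ℝ) := by
  classical
  -- find a brick i where Y is cheaper
  have hbrick : ∃ i : Fin n,
      ∑ s : Fin k, c (i, s) * (Y (i, s) : ℝ) < ∑ s : Fin k, c (i, s) * (X (i, s) : ℝ) := by
    by_contra h
    push_neg at h
    have : ∑ m, c m * (X m : ℝ) ≤ ∑ m, c m * (Y m : ℝ) := by
      rw [Fintype.sum_prod_type, Fintype.sum_prod_type]
      exact Finset.sum_le_sum fun i _ => h i
    linarith
  obtain ⟨i, hi⟩ := hbrick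
  set A : Finset (Fin k) := Finset.univ.filter (fun s => X (i, s) = 1 ∧ Y (i, s) = 0) with hA
  set B : Finset (Fin k) := Finset.univ.filter (fun s => X (i, s) = 0 ∧ Y (i, s) = 1) with hB
  -- cardinalities equal
  have hcard : (A.card : ℤ) = B.card := by
    have h1 : ∀ s : Fin k, X (i, s) - Y (i, s)
        = (if s ∈ A then (1:ℤ) else 0) - (if s ∈ B then (1:ℤ) else 0) := by
      intro s
      rcases hX01 (i, s) with hx | hx <;> rcases hY01 (i, s) with hy | hy <;>
        simp [hA, hB, hx, hy]
    have h2 : ∑ s : Fin k, (X (i, s) - Y (i, s)) = (A.card : ℤ) - B.card := by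
      rw [Finset.sum_congr rfl fun s _ => h1 s, Finset.sum_sub_distrib]
      simp [Finset.sum_ite_mem]
    have h3 : ∑ s : Fin k, (X (i, s) - Y (i, s)) = 0 := by
      rw [Finset.sum_sub_distrib, hsum i, sub_self]
    linarith [h2, h3]
  have hcardN : A.card = B.card := by exact_mod_cast hcard
  -- cost comparison
  have hAB : ∑ s ∈ B, c (i, s) < ∑ s ∈ A, c (i, s) := by
    have h1 : ∀ s : Fin k, c (i, s) * (X (i, s) : ℝ) - c (i, s) * (Y (i, s) : ℝ)
        = (if s ∈ A then c (i, s) else 0) - (if s ∈ B then c (i, s) else 0) := by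
      intro s
      rcases hX01 (i, s) with hx | hx <;> rcases hY01 (i, s) with hy | hy <;>
        simp [hA, hB, hx, hy]
    have h2 : ∑ s : Fin k, (c (i, s) * (X (i, s) : ℝ) - c (i, s) * (Y (i, s) : ℝ))
        = ∑ s ∈ A, c (i, s) - ∑ s ∈ B, c (i, s) := by
      rw [Finset.sum_congr rfl fun s _ => h1 s, Finset.sum_sub_distrib]
      simp [Finset.sum_ite_mem]
    rw [Finset.sum_sub_distrib] at h2
    linarith
  have hAne : A.Nonempty := by
    rcases A.eq_empty_or_nonempty with h | h
    · exfalso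
      have hb : B = ∅ := Finset.card_eq_zero.mp (by rw [← hcardN, h, Finset.card_empty])
      rw [h, hb] at hAB
      simp at hAB
    · exact h
  have hBne : B.Nonempty := by
    rw [← Finset.card_pos, ← hcardN, Finset.card_pos]; exact hAne
  obtain ⟨s, hsA, hsmax⟩ := A.exists_max_image (fun s => c (i, s)) hAne
  obtain ⟨t, htB, htmin⟩ := B.exists_min_image (fun s => c (i, s)) hBne
  have hXs : X (i, s) = 1 := (Finset.mem_filter.mp hsA).2.1
  have hXt : X (i, t) = 0 := (Finset.mem_filter.mp htB).2.1
  have hct : c (i, t) < c (i, s) := by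
    have h1 : ∑ s' ∈ A, c (i, s') ≤ A.card • c (i, s) :=
      Finset.sum_le_card_nsmul A _ _ fun x hx => hsmax x hx
    have h2 : B.card • c (i, t) ≤ ∑ s' ∈ B, c (i, s') :=
      Finset.card_nsmul_le_sum B _ _ fun x hx => htmin x hx
    rw [nsmul_eq_mul] at h1 h2
    rw [hcardN] at h1
    have hpos : (0:ℝ) < B.card := by
      exact_mod_cast Finset.card_pos.mpr hBne
    nlinarith
  have hst : s ≠ t := by intro h; rw [h, hXt] at hXs; exact absurd hXs (by norm_num)
  refine ⟨i, s, t, hXs, hXt, hct, ?_, ?_, ?_⟩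
  · intro m
    have hne : ((i, s) : Fin n × Fin k) ≠ (i, t) := by
      simp [Prod.ext_iff, hst]
    by_cases h1 : m = (i, s)
    · left; simp [h1, e, hXs, hne]
    · by_cases h2 : m = (i, t)
      · right; simp [h2, e, hXt, hne.symm]
      · simpa [e, h1, h2] using hX01 m
  · intro i'
    have : ∀ s' : Fin k, (X - e (i, s) + e (i, t)) (i', s')
        = X (i', s') - (if (i', s') = (i, s) then (1:ℤ) else 0)
          + (if (i', s') = (i, t) then (1:ℤ) else 0) := by
      intro s'; simp [e]
    rw [Finset.sum_congr rfl fun s' _ => this s']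
    by_cases hii : i' = i
    · subst hii
      simp [Prod.ext_iff, Finset.sum_add_distrib, Finset.sum_sub_distrib]
    · simp [Prod.ext_iff, hii]
  · have : ∀ m, c m * (((X - e (i, s) + e (i, t)) m : ℤ) : ℝ)
        = c m * (X m : ℝ) - (if m = (i, s) then c m else 0)
          + (if m = (i, t) then c m else 0) := by
      intro m
      by_cases h1 : m = (i, s) <;> by_cases h2 : m = (i, t) <;>
        simp [e, h1, h2] <;> ring_nf <;> simp_all [e]
    rw [Finset.sum_congr rfl fun m _ => this m]
    rw [Finset.sum_add_distrib, Finset.sum_sub_distrib]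
    simp [Finset.sum_ite_eq']
    linarith
end
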